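/- arXiv:2012.00349 — 2 statements merged into one kernel-verified Lean document; each statement's English description precedes it below -/
import Mathlib

section
/- Let R : ℝ^n → ℝ be concave on the nonnegative orthant [0,∞)^n. Then the function G : ℝ^n × ℝ^d → [0,+∞] defined by G(a,Q) = B(R(a),Q) if a ∈ [0,∞)^n and G(a,Q) = +∞ otherwise is convex. If moreover R is continuous on [0,∞)^n, then G is lower semicontinuous. -/
open scoped ENNReal RealInnerProductSpace
open MeasureTheory

open Classical in
/-- The Benamou–Brenier action density on `ℝ × ℝ^d`, with values in `[0,+∞]`. -/
noncomputable def BBdens (d : ℕ) (x : ℝ × EuclideanSpace ℝ (Fin d)) : ℝ≥0∞ :=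
  if 0 < x.1 then ENNReal.ofReal (‖x.2‖^2 / (2 * x.1))
  else if x.1 = 0 ∧ x.2 = 0 then 0 else ⊤

/-- `B(R(a), Q)` extended by `+∞` outside of the nonnegative orthant. -/
noncomputable def BBcomp (n d : ℕ) (R : EuclideanSpace ℝ (Fin n) → ℝ)
    (x : EuclideanSpace ℝ (Fin n) × EuclideanSpace ℝ (Fin d)) : ℝ≥0∞ :=
  if ∀ i, 0 ≤ x.1 i then BBdens d (R x.1, x.2) else ⊤

/-!
`B` is the support function of the parabola region `P = {(a, b) | a + |b|² / 2 ≤ 0}`: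
`B(p, Q) = sup_{(a, b) ∈ P} (a p + ⟪b, Q⟫)⁺`. A supremum of positive parts of continuous linear
functionals is convex and lower semicontinuous, and since `a ≤ 0` on `P`, `B` is nonincreasing in
`p`. Convexity of `G` follows by combining this monotonicity with the concavity of `R` on the convex
orthant; lower semicontinuity follows from the continuity of `R` on the closed orthant, off which
`G = +∞`.
-/

open Topology

def ConvexENNReal {E : Type*} [AddCommGroup E] [Module ℝ E] (f : E → ℝ≥0∞) : Prop :=
  ∀ (x y : E) (a b : ℝ), 0 ≤ a → 0 ≤ b → a + b = 1 →
    f (a • x + b • y) ≤ ENNReal.ofReal a * f x + ENNReal.ofReal b * f y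

section iSupOfReal

variable {E ι : Type*} [AddCommGroup E] [Module ℝ E]

lemma convexENNReal_iSup_ofReal (ℓ : ι → E →ₗ[ℝ] ℝ) :
    ConvexENNReal fun x ↦ ⨆ i, ENNReal.ofReal (ℓ i x) := by
  intro x y a b ha hb _
  refine iSup_le fun i ↦ ?_
  calc ENNReal.ofReal (ℓ i (a • x + b • y))
      = ENNReal.ofReal (a * ℓ i x + b * ℓ i y) := by simp
    _ ≤ ENNReal.ofReal a * ENNReal.ofReal (ℓ i x) + ENNReal.ofReal b * ENNReal.ofReal (ℓ i y) := by
      rw [← ENNReal.ofReal_mul ha, ← ENNReal.ofReal_mul hb]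
      exact ENNReal.ofReal_add_le
    _ ≤ _ := by gcongr <;> exact le_iSup (fun i ↦ ENNReal.ofReal (ℓ i _)) i

lemma lowerSemicontinuous_iSup_ofReal [TopologicalSpace E] (ℓ : ι → E →L[ℝ] ℝ) :
    LowerSemicontinuous fun x ↦ ⨆ i, ENNReal.ofReal (ℓ i x) :=
  lowerSemicontinuous_iSup fun i ↦
    (ENNReal.continuous_ofReal.comp (ℓ i).continuous).lowerSemicontinuous

end iSupOfReal

lemma LowerSemicontinuousOn.lowerSemicontinuous_of_eq_top {X : Type*} [TopologicalSpace X]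
    {S : Set X} (hS : IsClosed S) {f : X → ℝ≥0∞} (hf : LowerSemicontinuousOn f S)
    (htop : ∀ x ∉ S, f x = ⊤) : LowerSemicontinuous f := by
  intro x c hc
  have hc_top : c < ⊤ := hc.trans_le le_top
  have h_out : ∀ᶠ y in 𝓝[Sᶜ] x, c < f y := by
    filter_upwards [self_mem_nhdsWithin] with y hy
    rwa [htop y hy]
  by_cases hx : x ∈ S
  · rw [← nhdsWithin_univ, ← Set.union_compl_self S, nhdsWithin_union]
    exact Filter.eventually_sup.2 ⟨hf x hx c hc, h_out⟩
  · exact (nhdsWithin_eq_nhds.2 (hS.isOpen_compl.mem_nhds hx)).symm ▸ h_out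

lemma isClosed_setOf_forall_nonneg (ι : Type*) :
    IsClosed {a : EuclideanSpace ℝ ι | ∀ i, 0 ≤ a i} := by
  simp only [Set.ofPred_forall]
  exact isClosed_iInter fun i ↦ isClosed_le continuous_const (by fun_prop)

section BenamouBrenier

variable {d : ℕ}

def bbParabola (d : ℕ) : Set (ℝ × EuclideanSpace ℝ (Fin d)) := {c | c.1 + ‖c.2‖ ^ 2 / 2 ≤ 0}

noncomputable def bbPairing (c : ℝ × EuclideanSpace ℝ (Fin d)) :
    ℝ × EuclideanSpace ℝ (Fin d) →L[ℝ] ℝ :=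
  c.1 • ContinuousLinearMap.fst ℝ ℝ _ + (innerSL ℝ c.2).comp (ContinuousLinearMap.snd ℝ ℝ _)

lemma neg_norm_sq_half_mem_bbParabola (b : EuclideanSpace ℝ (Fin d)) :
    (-‖b‖ ^ 2 / 2, b) ∈ bbParabola d := by
  simp [bbParabola, neg_div]

@[simp]
lemma bbPairing_apply (c x : ℝ × EuclideanSpace ℝ (Fin d)) :
    bbPairing c x = c.1 * x.1 + ⟪c.2, x.2⟫ := rfl

lemma bbPairing_le_of_pos {c : ℝ × EuclideanSpace ℝ (Fin d)} (hc : c ∈ bbParabola d) {p : ℝ}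
    (hp : 0 < p) (Q : EuclideanSpace ℝ (Fin d)) :
    bbPairing c (p, Q) ≤ ‖Q‖ ^ 2 / (2 * p) := by
  have hc : c.1 + ‖c.2‖ ^ 2 / 2 ≤ 0 := hc
  have hCS : ⟪c.2, Q⟫ ≤ ‖c.2‖ * ‖Q‖ := real_inner_le_norm _ _
  rw [bbPairing_apply, le_div_iff₀ (by positivity)]
  nlinarith [sq_nonneg (p * ‖c.2‖ - ‖Q‖), mul_le_mul_of_nonneg_right hc (sq_nonneg p),
    mul_le_mul_of_nonneg_left hCS hp.le]

lemma bbPairing_eq_of_pos {p : ℝ} (hp : 0 < p) (Q : EuclideanSpace ℝ (Fin d)) :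
    bbPairing (-‖p⁻¹ • Q‖ ^ 2 / 2, p⁻¹ • Q) (p, Q) = ‖Q‖ ^ 2 / (2 * p) := by
  rw [bbPairing_apply, real_inner_smul_left, real_inner_self_eq_norm_sq, norm_smul,
    Real.norm_of_nonneg (inv_nonneg.2 hp.le)]
  field_simp
  ring

lemma exists_bbPairing_eq_of_not_pos {p : ℝ} {Q : EuclideanSpace ℝ (Fin d)} (hp : ¬ 0 < p)
    (hpQ : ¬ (p = 0 ∧ Q = 0)) {t : ℝ} (ht : 0 ≤ t) :
    ∃ c ∈ bbParabola d, bbPairing c (p, Q) = t := by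
  rcases (not_lt.1 hp).lt_or_eq with hp | rfl
  · refine ⟨(t / p, 0), ?_, ?_⟩
    · simpa [bbParabola] using div_nonpos_of_nonneg_of_nonpos ht hp.le
    · simp [hp.ne]
  · have hQ : ‖Q‖ ≠ 0 := by simpa using hpQ
    set s := t / ‖Q‖ ^ 2
    refine ⟨_, neg_norm_sq_half_mem_bbParabola (s • Q), ?_⟩
    simp [real_inner_smul_left, s, hQ]

lemma BBdens_eq_iSup (x : ℝ × EuclideanSpace ℝ (Fin d)) :
    BBdens d x = ⨆ c : bbParabola d, ENNReal.ofReal (bbPairing c x) := by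
  obtain ⟨p, Q⟩ := x
  by_cases hp : 0 < p
  · simp only [BBdens, hp, if_true]
    refine le_antisymm ?_ (iSup_le fun c ↦ ENNReal.ofReal_le_ofReal (bbPairing_le_of_pos c.2 hp Q))
    refine le_iSup_of_le ⟨_, neg_norm_sq_half_mem_bbParabola (p⁻¹ • Q)⟩ ?_
    rw [bbPairing_eq_of_pos hp Q]
  by_cases hpQ : p = 0 ∧ Q = 0
  · obtain ⟨rfl, rfl⟩ := hpQ
    simp [BBdens]
  rw [BBdens, if_neg hp, if_neg hpQ, eq_comm]
  refine ENNReal.eq_top_of_forall_nnreal_le fun r ↦ ?_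
  obtain ⟨c, hc, hval⟩ := exists_bbPairing_eq_of_not_pos hp hpQ r.2
  exact le_iSup_of_le (⟨c, hc⟩ : bbParabola d) (by simp [hval])

lemma convexENNReal_BBdens : ConvexENNReal (BBdens d) := by
  rw [funext BBdens_eq_iSup]
  exact convexENNReal_iSup_ofReal fun c : bbParabola d ↦ (bbPairing c.1).toLinearMap

lemma lowerSemicontinuous_BBdens : LowerSemicontinuous (BBdens d) := by
  rw [funext BBdens_eq_iSup]
  exact lowerSemicontinuous_iSup_ofReal fun c : bbParabola d ↦ bbPairing c.1

lemma BBdens_antitone_fst {p p' : ℝ} (h : p ≤ p') (Q : EuclideanSpace ℝ (Fin d)) :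
    BBdens d (p', Q) ≤ BBdens d (p, Q) := by
  simp only [BBdens_eq_iSup]
  refine iSup_mono fun c ↦ ENNReal.ofReal_le_ofReal ?_
  have hc : c.1.1 + ‖c.1.2‖ ^ 2 / 2 ≤ 0 := c.2
  simp only [bbPairing_apply, add_le_add_iff_right]
  exact mul_le_mul_of_nonpos_left h (by linarith [sq_nonneg ‖c.1.2‖])

end BenamouBrenier

section BBcomp

variable {n d : ℕ} {R : EuclideanSpace ℝ (Fin n) → ℝ}

lemma convexENNReal_BBcomp (hR : ConcaveOn ℝ {a : EuclideanSpace ℝ (Fin n) | ∀ i, 0 ≤ a i} R) :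
    ConvexENNReal (BBcomp n d R) := by
  intro x y a b ha hb hab
  rcases ha.eq_or_lt with rfl | ha
  · simp [show b = 1 by linarith]
  rcases hb.eq_or_lt with rfl | hb
  · simp [show a = 1 by linarith]
  by_cases hx : ∀ i, 0 ≤ x.1 i
  swap
  · simp [BBcomp, hx, ha]
  by_cases hy : ∀ i, 0 ≤ y.1 i
  swap
  · simp [BBcomp, hy, hb]
  have hxy : ∀ i, 0 ≤ (a • x + b • y).1 i := hR.1 hx hy ha.le hb.le hab
  rw [BBcomp, if_pos hxy, BBcomp, if_pos hx, BBcomp, if_pos hy]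
  calc BBdens d (R (a • x + b • y).1, (a • x + b • y).2)
      ≤ BBdens d (a * R x.1 + b * R y.1, (a • x + b • y).2) :=
        BBdens_antitone_fst (hR.2 hx hy ha.le hb.le hab) _
    _ ≤ _ := convexENNReal_BBdens (R x.1, x.2) (R y.1, y.2) a b ha.le hb.le hab

lemma lowerSemicontinuous_BBcomp
    (hR : ContinuousOn R {a : EuclideanSpace ℝ (Fin n) | ∀ i, 0 ≤ a i}) :
    LowerSemicontinuous (BBcomp n d R) := by
  set S : Set (EuclideanSpace ℝ (Fin n) × EuclideanSpace ℝ (Fin d)) := {x | ∀ i, 0 ≤ x.1 i}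
  have hS : IsClosed S := (isClosed_setOf_forall_nonneg _).preimage continuous_fst
  have hφ : ContinuousOn (fun x ↦ (R x.1, x.2)) S :=
    (hR.comp continuousOn_fst fun _ hx ↦ hx).prodMk continuousOn_snd
  refine LowerSemicontinuousOn.lowerSemicontinuous_of_eq_top hS (fun x hx ↦ ?_)
    fun x hx ↦ if_neg hx
  have hcomp := (lowerSemicontinuous_BBdens.lowerSemicontinuousOn Set.univ).comp hφ
    (Set.mapsTo_univ _ _) x hx
  exact LowerSemicontinuousWithinAt.congr_of_eventuallyEq hcomp hx
    (eventually_nhdsWithin_of_forall fun y (hy : ∀ i, 0 ≤ y.1 i) ↦ (if_pos hy).symm)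

end BBcomp

theorem BBcomp_convex_lsc_general (n d : ℕ)
    (R : EuclideanSpace ℝ (Fin n) → ℝ)
    (hR : ConcaveOn ℝ {a : EuclideanSpace ℝ (Fin n) | ∀ i, 0 ≤ a i} R) :
    (∀ (x y : EuclideanSpace ℝ (Fin n) × EuclideanSpace ℝ (Fin d)) (a b : ℝ),
      0 ≤ a → 0 ≤ b → a + b = 1 →
      BBcomp n d R (a • x + b • y) ≤
        ENNReal.ofReal a * BBcomp n d R x + ENNReal.ofReal b * BBcomp n d R y) ∧
    (ContinuousOn R {a : EuclideanSpace ℝ (Fin n) | ∀ i, 0 ≤ a i} →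
      LowerSemicontinuous (BBcomp n d R)) :=
  ⟨convexENNReal_BBcomp hR, lowerSemicontinuous_BBcomp⟩

theorem BBcomp_convex_lsc (n d : ℕ) (hn : 1 ≤ n) (hd : 1 ≤ d)
    (R : EuclideanSpace ℝ (Fin n) → ℝ)
    (hR : ConcaveOn ℝ {a : EuclideanSpace ℝ (Fin n) | ∀ i, 0 ≤ a i} R) :
    (∀ (x y : EuclideanSpace ℝ (Fin n) × EuclideanSpace ℝ (Fin d)) (a b : ℝ),
      0 ≤ a → 0 ≤ b → a + b = 1 →
      BBcomp n d R (a • x + b • y) ≤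
        ENNReal.ofReal a * BBcomp n d R x + ENNReal.ofReal b * BBcomp n d R y) ∧
    (ContinuousOn R {a : EuclideanSpace ℝ (Fin n) | ∀ i, 0 ≤ a i} →
      LowerSemicontinuous (BBcomp n d R)) :=
  BBcomp_convex_lsc_general n d R hR
end

section
/- Assume the graph whose vertices are the cells 𝒯 and which has an edge between K and L for every σ = K|L ∈ Σ is connected. Then the image of the discrete divergence div_𝒯 : 𝔽_𝒯 → ℝ^𝒯 is exactly {g ∈ ℝ^𝒯 : Σ_{K∈𝒯} g_K m_K = 0}; that is, Σ_K (div_𝒯 F)_K m_K = 0 for every F ∈ 𝔽_𝒯, and conversely for every g ∈ ℝ^𝒯 with Σ_K g_K m_K = 0 there exists F ∈ 𝔽_𝒯 with div_𝒯 F = g. -/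
/-!
Weighting by `m_K`, every edge `σ = K|L` contributes `F_{K,σ} m_σ + F_{L,σ} m_σ = 0` to
`Σ_K (div F)_K m_K`. Conversely, the flux `1/m_σ` on a single edge `σ = K|L` has divergence
`δ_K/m_K - δ_L/m_L`; adding these along a path of edges gives the same for any two cells, and
for a fixed cell `K₀`, `g = Σ_K g_K m_K (δ_K/m_K - δ_{K₀}/m_{K₀})` whenever `Σ_K g_K m_K = 0`.
-/

open scoped BigOperators ENNReal RealInnerProductSpace
open Finset

namespace OTFV

/-- The Benamou–Brenier action density for a scalar flux value. -/
noncomputable def Bact (p q : ℝ) : ℝ≥0∞ :=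
  if 0 < p then ENNReal.ofReal (q ^ 2 / (2 * p))
  else if p = 0 ∧ q = 0 then 0 else ⊤

/-- Combinatorial/metric data of an admissible TPFA mesh: cells `T`, internal
edges `E`; an edge `σ` joins the two distinct cells `e1 σ` and `e2 σ`. -/
structure Mesh (T E : Type*) where
  e1 : E → T
  e2 : E → T
  ne : ∀ σ, e1 σ ≠ e2 σ
  m : T → ℝ
  m_pos : ∀ K, 0 < m K
  mS : E → ℝ
  mS_pos : ∀ σ, 0 < mS σ
  dS : E → ℝ
  dS_pos : ∀ σ, 0 < dS σ
  d1 : E → ℝ   -- d_{K,σ} for K = e1 σ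
  d2 : E → ℝ   -- d_{L,σ} for L = e2 σ
  d1_pos : ∀ σ, 0 < d1 σ
  d2_pos : ∀ σ, 0 < d2 σ
  d_sum : ∀ σ, d1 σ + d2 σ = dS σ

variable {T T' E : Type*}

/-- A conservative flux is encoded by its value `F σ = F_{K,σ}` on the side `K = e1 σ`
(so that `F_{L,σ} = -F σ` for `L = e2 σ`).  Discrete divergence. -/
noncomputable def divT [Fintype E] [DecidableEq T] (M : Mesh T E) (F : E → ℝ) (K : T) : ℝ :=
  (∑ σ, ((if M.e1 σ = K then F σ else 0) + (if M.e2 σ = K then -F σ else 0)) * M.mS σ) / M.m K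

/-- Discrete gradient, oriented from `e1 σ` to `e2 σ` (the `(K,σ)` component, `K = e1 σ`). -/
noncomputable def gradS (M : Mesh T E) (a : T → ℝ) (σ : E) : ℝ :=
  (a (M.e2 σ) - a (M.e1 σ)) / M.dS σ

/-- Linear (weighted arithmetic mean) reconstruction on edges. -/
noncomputable def linRec (M : Mesh T E) (a : T → ℝ) (σ : E) : ℝ :=
  (M.d1 σ / M.dS σ) * a (M.e1 σ) + (M.d2 σ / M.dS σ) * a (M.e2 σ)

/-- Injection from coarse densities to fine densities, `p` maps a fine cell to its coarse cell. -/
def inj (p : T → T') (ρ : T' → ℝ) : T → ℝ := fun K => ρ (p K)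

/-- Mass of a coarse cell. -/
noncomputable def coarseM [Fintype T] [DecidableEq T'] (M : Mesh T E) (p : T → T') (K' : T') : ℝ :=
  ∑ K ∈ Finset.univ.filter (fun K => p K = K'), M.m K

/-- Adjoint of the injection. -/
noncomputable def injAdj [Fintype T] [DecidableEq T'] (M : Mesh T E) (p : T → T')
    (a : T → ℝ) (K' : T') : ℝ :=
  (∑ K ∈ Finset.univ.filter (fun K => p K = K'), a K * M.m K) / coarseM M p K'

/-- Adjoint of the linear reconstruction, `(L_Σ^* u)_K = Σ_{σ∈Σ_K} u_σ m_σ d_{K,σ}/m_K`. -/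
noncomputable def linRecAdj [Fintype E] [DecidableEq T] (M : Mesh T E) (u : E → ℝ) (K : T) : ℝ :=
  (∑ σ, ((if M.e1 σ = K then u σ * M.mS σ * M.d1 σ else 0) +
          (if M.e2 σ = K then u σ * M.mS σ * M.d2 σ else 0))) / M.m K

/-- `R_{𝒯'} = 𝕀^* ∘ L_Σ^*`. -/
noncomputable def coarseRec [Fintype T] [Fintype E] [DecidableEq T] [DecidableEq T']
    (M : Mesh T E) (p : T → T') (u : E → ℝ) (K' : T') : ℝ :=
  injAdj M p (linRecAdj M u) K'

/-- Weighted scalar product on the coarse space. -/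
noncomputable def iprodC [Fintype T] [Fintype T'] [DecidableEq T'] (M : Mesh T E) (p : T → T')
    (a b : T' → ℝ) : ℝ :=
  ∑ K', a K' * b K' * coarseM M p K'

/-- The discrete Benamou–Brenier functional `B_{N,𝒯}`; the time step is `τ = 1/(N+1)`,
`ρ k.succ` stands for `ρ^k` and `ρ k.castSucc` for `ρ^{k-1}`, `k = 1, …, N+1`. -/
noncomputable def Benergy [Fintype E] [Fintype T'] (M : Mesh T E) (p : T → T') (N : ℕ)
    (ρ : Fin (N+2) → T' → ℝ) (F : Fin (N+1) → E → ℝ) : ℝ≥0∞ :=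
  if ∀ k K', 0 ≤ ρ k K' then
    ∑ k : Fin (N+1),
      ENNReal.ofReal ((1:ℝ)/(N+1)) *
        ∑ σ, Bact (linRec M (inj p (fun K' => (ρ k.succ K' + ρ k.castSucc K') / 2)) σ) (F k σ) *
          ENNReal.ofReal (M.mS σ * M.dS σ)
  else ⊤

/-- The discrete continuity equation. -/
def ContEq [Fintype E] [DecidableEq T] (M : Mesh T E) (p : T → T') (N : ℕ)
    (ρ : Fin (N+2) → T' → ℝ) (F : Fin (N+1) → E → ℝ) : Prop :=
  ∀ (k : Fin (N+1)) (K : T),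
    (ρ k.succ (p K) - ρ k.castSucc (p K)) / ((1:ℝ)/(N+1)) + divT M (F k) K = 0

/-- The constraint set `𝒞_{N,𝒯}`. -/
def Cset [Fintype E] [DecidableEq T] (M : Mesh T E) (p : T → T') (N : ℕ)
    (ρin ρf : T' → ℝ) : Set ((Fin (N+2) → T' → ℝ) × (Fin (N+1) → E → ℝ)) :=
  {x | x.1 0 = ρin ∧ x.1 (Fin.last (N+1)) = ρf ∧ ContEq M p N x.1 x.2}

/-- The (halved, squared) discrete Wasserstein distance: `W² = 2 inf B`. -/
noncomputable def Wdist2 [Fintype E] [Fintype T'] [DecidableEq T] (M : Mesh T E) (p : T → T')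
    (N : ℕ) (ρin ρf : T' → ℝ) : ℝ≥0∞ :=
  2 * ⨅ (x : (Fin (N+2) → T' → ℝ) × (Fin (N+1) → E → ℝ)) (_ : x ∈ Cset M p N ρin ρf),
    Benergy M p N x.1 x.2

/-- Logarithmic barrier. -/
noncomputable def Jlog (x : ℝ) : EReal := if 0 < x then ((- Real.log x : ℝ) : EReal) else ⊤

/-- The barrier functional `J_{N,𝒯}` (only the interior times `k = 1, …, N`). -/
noncomputable def Jbar [Fintype T] [Fintype T'] [DecidableEq T'] (M : Mesh T E) (p : T → T')
    (N : ℕ) (ρ : Fin (N+2) → T' → ℝ) : EReal :=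
  ∑ k : Fin N, (((1:ℝ)/(N+1) : ℝ) : EReal) *
    ∑ K', Jlog (ρ (k.succ.castSucc) K') * ((coarseM M p K' : ℝ) : EReal)

/-- Perturbed objective `B_{N,𝒯} + μ J_{N,𝒯}`, with values in `EReal`. -/
noncomputable def Pobj [Fintype T] [Fintype T'] [Fintype E] [DecidableEq T'] (M : Mesh T E)
    (p : T → T') (N : ℕ) (μ : ℝ) (ρ : Fin (N+2) → T' → ℝ) (F : Fin (N+1) → E → ℝ) : EReal :=
  (Benergy M p N ρ F : EReal) + (μ : EReal) * Jbar M p N ρ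

/-- Connectivity of the graph of cells induced by the internal edges. -/
def MeshConnected (M : Mesh T E) : Prop :=
  ∀ K L : T, Relation.ReflTransGen
    (fun a b => ∃ σ, (M.e1 σ = a ∧ M.e2 σ = b) ∨ (M.e1 σ = b ∧ M.e2 σ = a)) K L

section Divergence

variable [Fintype E] [DecidableEq T] (M : Mesh T E)

theorem divT_mul_m (F : E → ℝ) (K : T) :
    divT M F K * M.m K =
      ∑ σ, ((if M.e1 σ = K then F σ else 0) + (if M.e2 σ = K then -F σ else 0)) * M.mS σ :=
  div_mul_cancel₀ _ (M.m_pos K).ne'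

theorem sum_divT_mul_m [Fintype T] (F : E → ℝ) : ∑ K, divT M F K * M.m K = 0 := by
  simp_rw [divT_mul_m, Finset.sum_comm (γ := T), ← Finset.sum_mul, Finset.sum_add_distrib,
    Finset.sum_ite_eq, Finset.mem_univ, if_true, add_neg_cancel, zero_mul, Finset.sum_const_zero]

noncomputable def divLinearMap : (E → ℝ) →ₗ[ℝ] T → ℝ where
  toFun := divT M
  map_add' F G := by
    ext K
    simp only [divT, Pi.add_apply, ← add_div, ← Finset.sum_add_distrib]
    congr 1
    refine Finset.sum_congr rfl fun σ _ => ?_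
    split_ifs <;> ring
  map_smul' c F := by
    ext K
    simp only [divT, Pi.smul_apply, smul_eq_mul, RingHom.id_apply, mul_div_assoc', Finset.mul_sum]
    congr 1
    refine Finset.sum_congr rfl fun σ _ => ?_
    split_ifs <;> ring

end Divergence

section Dipole

variable [DecidableEq T] (M : Mesh T E)

noncomputable def dipole (K L : T) : T → ℝ :=
  Pi.single K (M.m K)⁻¹ - Pi.single L (M.m L)⁻¹

theorem dipole_self (K : T) : dipole M K K = 0 := sub_self _

theorem dipole_add_dipole (K L N : T) : dipole M K L + dipole M L N = dipole M K N :=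
  sub_add_sub_cancel _ _ _

theorem neg_dipole (K L : T) : -dipole M K L = dipole M L K := neg_sub _ _

theorem sum_smul_dipole [Fintype T] (g : T → ℝ) (hg : ∑ K, g K * M.m K = 0) (K₀ : T) :
    ∑ K, (g K * M.m K) • dipole M K K₀ = g := by
  simp only [dipole, smul_sub, Finset.sum_sub_distrib, ← Finset.sum_smul, hg, zero_smul, sub_zero]
  ext L
  simp [Finset.sum_apply, Pi.single_apply, (M.m_pos _).ne']

variable [Fintype E]

theorem divT_single [DecidableEq E] (σ : E) :
    divT M (Pi.single σ (M.mS σ)⁻¹) = dipole M (M.e1 σ) (M.e2 σ) := by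
  ext K
  have hmS := (M.mS_pos σ).ne'
  rw [divT, Finset.sum_eq_single σ (fun τ _ hτ => by simp [hτ]) (by simp)]
  simp only [Pi.single_eq_same, dipole, Pi.sub_apply, Pi.single_apply, eq_comm (a := K)]
  split_ifs with h₁ h₂ h₂ <;> subst_vars
  · exact absurd h₂ (M.ne σ).symm
  all_goals field_simp; ring

theorem dipole_mem_range_of_reflTransGen [DecidableEq E] {K L : T} (h : Relation.ReflTransGen
    (fun a b => ∃ σ, (M.e1 σ = a ∧ M.e2 σ = b) ∨ (M.e1 σ = b ∧ M.e2 σ = a)) K L) :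
    dipole M K L ∈ LinearMap.range (divLinearMap M (E := E)) := by
  induction h with
  | refl => simpa only [dipole_self] using Submodule.zero_mem _
  | @tail L N _ hLN ih =>
    rw [← dipole_add_dipole M K L N]
    refine Submodule.add_mem _ ih ?_
    obtain ⟨σ, ⟨rfl, rfl⟩ | ⟨rfl, rfl⟩⟩ := hLN
    · exact ⟨_, divT_single M σ⟩
    · rw [← neg_dipole]
      exact Submodule.neg_mem _ ⟨_, divT_single M σ⟩

theorem mem_range_divLinearMap [Fintype T] (hconn : MeshConnected M) {g : T → ℝ}
    (hg : ∑ K, g K * M.m K = 0) : g ∈ LinearMap.range (divLinearMap M (E := E)) := by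
  classical
  cases isEmpty_or_nonempty T with
  | inl _ => exact Subsingleton.elim (0 : T → ℝ) g ▸ Submodule.zero_mem _
  | inr hT =>
    obtain ⟨K₀⟩ := hT
    rw [← sum_smul_dipole M g hg K₀]
    exact Submodule.sum_mem _ fun K _ =>
      Submodule.smul_mem _ _ (dipole_mem_range_of_reflTransGen M (hconn K K₀))

end Dipole

end OTFV

open OTFV

theorem div_image
    {T E : Type*} [Fintype T] [Fintype E] [DecidableEq T]
    (M : Mesh T E) (hconn : MeshConnected M) :
    (∀ F : E → ℝ, ∑ K, divT M F K * M.m K = 0) ∧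
    (∀ g : T → ℝ, ∑ K, g K * M.m K = 0 → ∃ F : E → ℝ, divT M F = g) :=
  ⟨sum_divT_mul_m M, fun _ hg => mem_range_divLinearMap M hconn hg⟩
end
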